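/- arXiv:math/0605610 — 6 statements merged into one kernel-verified Lean document; each statement's English description precedes it below -/
import Mathlib

section
/- Let m be a positive integer and let a_0, a_1, …, a_m be integers. Define the 2m×2m integer matrix w by w_{i,j} := a_i if 1 ≤ i ≤ m and 1 ≤ j ≤ m, and w_{i,j} := 0 otherwise. Then there exists a permutation σ of {1,…,2m} with Σ_{i=1}^{2m} w_{i,σ(i)} = a_0 if and only if there exists a subset I ⊆ {1,…,m} with Σ_{i∈I} a_i = a_0. -/
/-!
Identify `Fin (2 * m)` with `Fin m ⊕ Fin m`; then `w` is the block matrix with `a i` in every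
entry of row `i` of the upper-left block and `0` elsewhere. A permutation `σ` collects `a i`
exactly for the rows `i` of the upper half that it sends into the upper half, so its weight is
the subset sum over those rows. Conversely, every subset `I` arises this way from the involution
that fixes the rows in `I` and swaps the two copies of every other row.
-/

open Finset Equiv

variable {α β ι R : Type*} [AddCommMonoid R]

def matchingWeight [Fintype β] (w : Matrix β β R) (σ : Perm β) : R :=
  ∑ i, w i (σ i)

lemma matchingWeight_submatrix [Fintype α] [Fintype β] (w : Matrix β β R) (e : α ≃ β)
    (τ : Perm α) : matchingWeight (w.submatrix e e) τ = matchingWeight w (e.permCongr τ) := by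
  rw [matchingWeight, matchingWeight, ← e.sum_comp]
  simp

section SwapOutside

variable [DecidableEq ι]

def swapOutside (I : Finset ι) (x : ι ⊕ ι) : ι ⊕ ι :=
  match x with
  | .inl i => if i ∈ I then .inl i else .inr i
  | .inr i => if i ∈ I then .inr i else .inl i

lemma swapOutside_involutive (I : Finset ι) : Function.Involutive (swapOutside I) := by
  rintro (i | i) <;> by_cases hi : i ∈ I <;> simp [swapOutside, hi]

lemma isLeft_swapOutside_inl (I : Finset ι) (i : ι) :
    (swapOutside I (.inl i)).isLeft ↔ i ∈ I := by
  by_cases hi : i ∈ I <;> simp [swapOutside, hi]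

end SwapOutside

section RowBlockMatrix

variable [Fintype ι]

def rowBlockMatrix (a : ι → R) : Matrix (ι ⊕ ι) (ι ⊕ ι) R :=
  Matrix.fromBlocks (Matrix.of fun i _ => a i) 0 0 0

lemma matchingWeight_rowBlockMatrix (a : ι → R) (σ : Perm (ι ⊕ ι)) :
    matchingWeight (rowBlockMatrix a) σ = ∑ i with (σ (.inl i)).isLeft, a i := by
  rw [matchingWeight, Fintype.sum_sum_type, sum_filter]
  have hlower (i : ι) : rowBlockMatrix a (.inr i) (σ (.inr i)) = 0 := by
    rcases σ (.inr i) with j | j <;> rfl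
  have hupper (i : ι) : rowBlockMatrix a (.inl i) (σ (.inl i)) =
      if (σ (.inl i)).isLeft then a i else 0 := by
    rcases σ (.inl i) with j | j <;> rfl
  simp only [hlower, hupper, sum_const_zero, add_zero]

theorem exists_matchingWeight_rowBlockMatrix_eq_iff [DecidableEq ι] (a : ι → R) (a₀ : R) :
    (∃ σ, matchingWeight (rowBlockMatrix a) σ = a₀) ↔ ∃ I : Finset ι, ∑ i ∈ I, a i = a₀ := by
  simp only [matchingWeight_rowBlockMatrix]
  constructor
  · rintro ⟨σ, hσ⟩
    exact ⟨_, hσ⟩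
  · rintro ⟨I, hI⟩
    refine ⟨(swapOutside_involutive I).toPerm, ?_⟩
    simpa only [Function.Involutive.coe_toPerm, isLeft_swapOutside_inl, filter_mem_eq_inter,
      univ_inter] using hI

end RowBlockMatrix

theorem subset_sum_reduction_general (m : ℕ) (a₀ : ℤ) (a : Fin m → ℤ)
    (w : Matrix (Fin (2 * m)) (Fin (2 * m)) ℤ)
    (hw : ∀ i j, w i j =
      if h : i.val < m ∧ j.val < m then a ⟨i.val, h.1⟩ else 0) :
    (∃ σ : Equiv.Perm (Fin (2 * m)), ∑ i, w i (σ i) = a₀) ↔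
      ∃ I : Finset (Fin m), ∑ i ∈ I, a i = a₀ := by
  let e : Fin m ⊕ Fin m ≃ Fin (2 * m) := finSumFinEquiv.trans (finCongr (two_mul m).symm)
  have hblocks : w.submatrix e e = rowBlockMatrix a := by
    ext (i | i) (j | j) <;> simp [e, hw, rowBlockMatrix]
  rw [← exists_matchingWeight_rowBlockMatrix_eq_iff, ← hblocks]
  simp only [matchingWeight_submatrix]
  exact e.permCongr.symm.exists_congr_left

theorem subset_sum_reduction (m : ℕ) (hm : 0 < m) (a₀ : ℤ) (a : Fin m → ℤ)
    (w : Matrix (Fin (2 * m)) (Fin (2 * m)) ℤ)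
    (hw : ∀ i j, w i j =
      if h : i.val < m ∧ j.val < m then a ⟨i.val, h.1⟩ else 0) :
    (∃ σ : Equiv.Perm (Fin (2 * m)), ∑ i, w i (σ i) = a₀) ↔
      ∃ I : Finset (Fin m), ∑ i ∈ I, a i = a₀ :=
  subset_sum_reduction_general m a₀ a w hw
end

section
/- Let n, d be positive integers and let w^1,…,w^d ∈ ℤ^{n×n} be entrywise nonnegative weight matrices, and let 1 ≤ p ≤ ∞. Then there exists a permutation σ̂ of {1,…,n} whose projection w·x_{σ̂} is an extreme point of the multiobjective polytope Π_w^n and which satisfies ‖w·x_{σ̂}‖_p ≤ d · ‖w·x_π‖_p for every permutation π of {1,…,n}; that is, σ̂ is a d-approximative solution to minimizing ‖w·x‖_p over perfect matchings. -/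
/-!
On the nonnegative orthant, which contains the multiobjective polytope when the weights are
nonnegative, the ℓ₁ norm is the linear functional `y ↦ ∑ k, y k`, and
`‖y‖_p ≤ ‖y‖₁ ≤ d ‖y‖_p`. By Birkhoff–von Neumann the polytope is the convex hull of the images
of the permutation matrices, so the ℓ₁ norm attains its minimum over it at an extreme point, which
is the image of some permutation `σ̂`. Then `‖w x_σ̂‖_p ≤ ‖w x_σ̂‖₁ ≤ ‖w x_π‖₁ ≤ d ‖w x_π‖_p`.
-/

/-- The Birkhoff polytope: n×n doubly stochastic real matrices. -/
def birkhoff (n : ℕ) : Set (Matrix (Fin n) (Fin n) ℝ) :=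
  {x | (∀ i j, 0 ≤ x i j) ∧ (∀ i, ∑ j, x i j = 1) ∧ (∀ j, ∑ i, x i j = 1)}

/-- The permutation matrix of a permutation σ: entry (i,j) is 1 iff j = σ i. -/
def permMat (n : ℕ) (σ : Equiv.Perm (Fin n)) : Matrix (Fin n) (Fin n) ℝ :=
  fun i j => if j = σ i then 1 else 0

/-- The projection x ↦ (w¹·x, …, w^d·x). -/
def proj {n d : ℕ} (w : Fin d → Matrix (Fin n) (Fin n) ℤ)
    (x : Matrix (Fin n) (Fin n) ℝ) : Fin d → ℝ :=
  fun k => ∑ i, ∑ j, (w k i j : ℝ) * x i j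

/-- The ℓ_p norm on ℝ^d for 1 ≤ p ≤ ∞. -/
noncomputable def lpNorm {d : ℕ} (p : ENNReal) (y : Fin d → ℝ) : ℝ :=
  if p = ⊤ then ⨆ k, |y k| else (∑ k, |y k| ^ p.toReal) ^ (1 / p.toReal)


open Set Finset

theorem Finset.sum_rpow_le_rpow_sum {ι : Type*} (s : Finset ι) {f : ι → ℝ}
    (hf : ∀ i ∈ s, 0 ≤ f i) {r : ℝ} (hr : 1 ≤ r) : ∑ i ∈ s, f i ^ r ≤ (∑ i ∈ s, f i) ^ r := by
  classical
  induction s using Finset.induction with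
  | empty => simp [Real.zero_rpow (by linarith : r ≠ 0)]
  | insert a s ha ih =>
    have hs : ∀ i ∈ s, 0 ≤ f i := fun i hi => hf i (mem_insert_of_mem hi)
    rw [sum_insert ha, sum_insert ha]
    calc f a ^ r + ∑ i ∈ s, f i ^ r ≤ f a ^ r + (∑ i ∈ s, f i) ^ r := by gcongr; exact ih hs
      _ ≤ (f a + ∑ i ∈ s, f i) ^ r :=
        Real.add_rpow_le_rpow_add (hf a (mem_insert_self a s)) (sum_nonneg hs) hr

section lpNorm

variable {d : ℕ} {p : ENNReal}

theorem abs_le_lpNorm (hp : p ≠ 0) (y : Fin d → ℝ) (k : Fin d) : |y k| ≤ lpNorm p y := by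
  unfold lpNorm
  split_ifs with htop
  · exact le_ciSup (f := fun j => |y j|) (finite_range _).bddAbove k
  · have hr : 0 < p.toReal := ENNReal.toReal_pos hp htop
    rw [one_div, Real.le_rpow_inv_iff_of_pos (abs_nonneg _) (by positivity) hr]
    exact single_le_sum (f := fun j => |y j| ^ p.toReal) (fun j _ => by positivity) (mem_univ k)

theorem lpNorm_le_sum_abs (hp : 1 ≤ p) (y : Fin d → ℝ) : lpNorm p y ≤ ∑ k, |y k| := by
  unfold lpNorm
  split_ifs with htop
  · exact Real.iSup_le (fun k => single_le_sum (fun j _ => abs_nonneg (y j)) (mem_univ k))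
      (sum_nonneg fun j _ => abs_nonneg (y j))
  · have hr : 1 ≤ p.toReal := by simpa using ENNReal.toReal_mono htop hp
    rw [one_div, Real.rpow_inv_le_iff_of_pos (by positivity) (by positivity) (by linarith)]
    exact univ.sum_rpow_le_rpow_sum (fun k _ => abs_nonneg (y k)) hr

theorem sum_abs_le_card_mul_lpNorm (hp : p ≠ 0) (y : Fin d → ℝ) :
    ∑ k, |y k| ≤ d * lpNorm p y := by
  simpa using sum_le_card_nsmul univ _ _ fun k _ => abs_le_lpNorm hp y k

theorem lpNorm_le_card_mul_lpNorm_of_sum_le (hp : 1 ≤ p) {y z : Fin d → ℝ} (hy : 0 ≤ y)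
    (hz : 0 ≤ z) (hyz : ∑ k, y k ≤ ∑ k, z k) : lpNorm p y ≤ d * lpNorm p z := by
  have hp0 : p ≠ 0 := (zero_lt_one.trans_le hp).ne'
  calc lpNorm p y ≤ ∑ k, |y k| := lpNorm_le_sum_abs hp y
    _ = ∑ k, y k := sum_congr rfl fun k _ => abs_of_nonneg (hy k)
    _ ≤ ∑ k, z k := hyz
    _ = ∑ k, |z k| := sum_congr rfl fun k _ => (abs_of_nonneg (hz k)).symm
    _ ≤ d * lpNorm p z := sum_abs_le_card_mul_lpNorm hp0 z

end lpNorm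

theorem IsCompact.exists_mem_extremePoints_isMinOn {E : Type*} [AddCommGroup E] [Module ℝ E]
    [TopologicalSpace E] [T2Space E] [IsTopologicalAddGroup E] [ContinuousSMul ℝ E]
    [LocallyConvexSpace ℝ E] {s : Set E} (hs : IsCompact s) (hne : s.Nonempty) (l : E →L[ℝ] ℝ) :
    ∃ x ∈ s.extremePoints ℝ, IsMinOn l s x := by
  have hexp : IsExposed ℝ s {x ∈ s | ∀ y ∈ s, (-l) y ≤ (-l) x} := fun _ => ⟨-l, rfl⟩
  obtain ⟨z, hzs, hz⟩ := hs.exists_isMinOn hne l.continuous.continuousOn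
  obtain ⟨x, hx⟩ := (hexp.isCompact hs).extremePoints_nonempty
    ⟨z, hzs, fun y hy => neg_le_neg (hz hy)⟩
  exact ⟨x, hexp.isExtreme.extremePoints_subset_extremePoints hx,
    fun y hy => le_of_neg_le_neg (hx.1.2 y hy)⟩

theorem birkhoff_eq_convexHull_permMat (n : ℕ) :
    birkhoff n = convexHull ℝ (range (permMat n)) := by
  have hperm : permMat n = fun σ => σ.permMatrix ℝ := by
    ext σ i j
    simp [permMat, Equiv.Perm.permMatrix, PEquiv.toMatrix_apply, eq_comm]
  have hds : birkhoff n = doublyStochastic ℝ (Fin n) := by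
    ext x
    exact mem_doublyStochastic_iff_sum.symm
  rw [hds, doublyStochastic_eq_convexHull_permMatrix, hperm]
  rfl

def projLinearMap {n d : ℕ} (w : Fin d → Matrix (Fin n) (Fin n) ℤ) :
    Matrix (Fin n) (Fin n) ℝ →ₗ[ℝ] (Fin d → ℝ) where
  toFun := proj w
  map_add' x y := by
    ext k
    simp [proj, mul_add, sum_add_distrib]
  map_smul' c x := by
    ext k
    simp [proj, mul_sum, mul_left_comm]

theorem proj_image_birkhoff {n d : ℕ} (w : Fin d → Matrix (Fin n) (Fin n) ℤ) :
    proj w '' birkhoff n = convexHull ℝ (range fun σ => proj w (permMat n σ)) := by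
  rw [birkhoff_eq_convexHull_permMat]
  change projLinearMap w '' _ = _
  rw [LinearMap.image_convexHull, ← range_comp]
  rfl

theorem proj_permMat_nonneg {n d : ℕ} {w : Fin d → Matrix (Fin n) (Fin n) ℤ}
    (hw : ∀ k i j, 0 ≤ w k i j) (σ : Equiv.Perm (Fin n)) : 0 ≤ proj w (permMat n σ) :=
  fun k => sum_nonneg fun i _ => sum_nonneg fun j _ =>
    mul_nonneg (Int.cast_nonneg (hw k i j)) (by unfold permMat; split_ifs <;> norm_num)

theorem min_lpNorm_d_approx_general (n d : ℕ)
    (p : ENNReal) (hp : 1 ≤ p)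
    (w : Fin d → Matrix (Fin n) (Fin n) ℤ) (hw : ∀ k i j, 0 ≤ w k i j) :
    ∃ σ : Equiv.Perm (Fin n),
      proj w (permMat n σ) ∈ Set.extremePoints ℝ (proj w '' birkhoff n) ∧
      ∀ π : Equiv.Perm (Fin n),
        lpNorm p (proj w (permMat n σ)) ≤ (d : ℝ) * lpNorm p (proj w (permMat n π)) := by
  set vertices := range fun σ : Equiv.Perm (Fin n) => proj w (permMat n σ)
  have hcompact : IsCompact (convexHull ℝ vertices) := (finite_range _).isCompact_convexHull ℝ
  have hne : (convexHull ℝ vertices).Nonempty := ⟨_, subset_convexHull ℝ _ ⟨1, rfl⟩⟩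
  obtain ⟨z, hz, hmin⟩ :=
    hcompact.exists_mem_extremePoints_isMinOn hne (∑ k, ContinuousLinearMap.proj k)
  obtain ⟨σ, rfl⟩ := extremePoints_convexHull_subset hz
  refine ⟨σ, proj_image_birkhoff w ▸ hz, fun π => ?_⟩
  have hsum := hmin (subset_convexHull ℝ _ ⟨π, rfl⟩)
  exact lpNorm_le_card_mul_lpNorm_of_sum_le hp (proj_permMat_nonneg hw σ)
    (proj_permMat_nonneg hw π) (by simpa using hsum)

theorem min_lpNorm_d_approx (n d : ℕ) (hn : 0 < n) (hd : 0 < d)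
    (p : ENNReal) (hp : 1 ≤ p)
    (w : Fin d → Matrix (Fin n) (Fin n) ℤ) (hw : ∀ k i j, 0 ≤ w k i j) :
    ∃ σ : Equiv.Perm (Fin n),
      proj w (permMat n σ) ∈ Set.extremePoints ℝ (proj w '' birkhoff n) ∧
      ∀ π : Equiv.Perm (Fin n),
        lpNorm p (proj w (permMat n σ)) ≤ (d : ℝ) * lpNorm p (proj w (permMat n π)) :=
  min_lpNorm_d_approx_general n d p hp w hw
end

section
/- Let n, d be positive integers, let 1 ≤ p < ∞ be a real number, and let w^1,…,w^d ∈ ℤ^{n×n} be entrywise nonnegative weight matrices. Suppose for each k = 1,…,d, x^k is a permutation matrix with w^k·x^k ≥ w^k·x_π for every permutation π of {1,…,n}. Then for every permutation matrix x_π one has ‖w·x_π‖_p^p ≤ d · max_{k=1,…,d} ‖w·x^k‖_p^p; in particular, the best of x^1,…,x^d is a d^{1/p}-approximative solution to maximizing ‖w·x‖_p over perfect matchings. -/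
/-- The p-th power of the ℓ_p norm on ℝ^d : ‖y‖_p^p = Σ_k |y_k|^p. -/
noncomputable def lpNormPow {d : ℕ} (p : ℝ) (y : Fin d → ℝ) : ℝ :=
  ∑ k, |y k| ^ p

theorem max_lpNorm_approx (n d : ℕ) (hn : 0 < n) (hd : 0 < d)
    (p : ℝ) (hp : 1 ≤ p)
    (w : Fin d → Matrix (Fin n) (Fin n) ℤ) (hw : ∀ k i j, 0 ≤ w k i j)
    (x : Fin d → Equiv.Perm (Fin n))
    (hx : ∀ k (π : Equiv.Perm (Fin n)),
      proj w (permMat n π) k ≤ proj w (permMat n (x k)) k) :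
    ∀ π : Equiv.Perm (Fin n),
      lpNormPow p (proj w (permMat n π)) ≤
        (d : ℝ) * ⨆ k, lpNormPow p (proj w (permMat n (x k))) := by
  intro π
  have hnn : ∀ (σ : Equiv.Perm (Fin n)) (k : Fin d), 0 ≤ proj w (permMat n σ) k := by
    intro σ k
    apply Finset.sum_nonneg
    intro i _
    apply Finset.sum_nonneg
    intro j _
    apply mul_nonneg
    · exact_mod_cast hw k i j
    · unfold permMat; positivity
  have hbdd : BddAbove (Set.range fun k => lpNormPow p (proj w (permMat n (x k)))) :=
    Set.Finite.bddAbove (Set.finite_range _)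
  have key : ∀ k : Fin d, |proj w (permMat n π) k| ^ p ≤
      ⨆ k, lpNormPow p (proj w (permMat n (x k))) := by
    intro k
    refine le_trans ?_ (le_ciSup hbdd k)
    have h1 : |proj w (permMat n π) k| ^ p ≤ |proj w (permMat n (x k)) k| ^ p := by
      apply Real.rpow_le_rpow (abs_nonneg _)
      · rw [abs_of_nonneg (hnn π k), abs_of_nonneg (hnn (x k) k)]
        exact hx k π
      · linarith
    refine h1.trans ?_
    unfold lpNormPow
    exact Finset.single_le_sum (fun j _ => Real.rpow_nonneg (abs_nonneg _) p)
      (Finset.mem_univ k)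
  calc lpNormPow p (proj w (permMat n π))
      ≤ ∑ _k : Fin d, ⨆ k, lpNormPow p (proj w (permMat n (x k))) :=
        Finset.sum_le_sum fun k _ => key k
    _ = (d : ℝ) * ⨆ k, lpNormPow p (proj w (permMat n (x k))) := by
        simp [Finset.sum_const, mul_comm]
end

section
/- Let n, d be positive integers and let w^1,…,w^d ∈ ℕ^{n×n} be nonnegative integer weight matrices. For a vector y ∈ ℕ^d, define the multivariate polynomial g_y over ℤ in the n² variables a_{i,j} (1 ≤ i,j ≤ n) by g_y(a) := Σ { sign(σ) · Π_{i=1}^n a_{i,σ(i)} : σ a permutation of {1,…,n} with w·x_σ = y }. If there exists at least one permutation σ with w·x_σ = y, then g_y is a nonzero polynomial of total degree n. -/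
/-!
Each term sign(τ) · ∏ᵢ a_{i,τ(i)} is a monomial of degree n, so g_y is homogeneous of degree n,
and its total degree is n as soon as it is nonzero. It is nonzero because evaluating it at the
permutation matrix x_σ of a σ with w·x_σ = y kills every term except that of σ, leaving
sign(σ) = ±1.
-/

/-- Projection of the permutation matrix of σ under the weights:
(w·x_σ)_k = Σ_i wᵏ_{i,σ(i)}. -/
def projPerm {n d : ℕ} (w : Fin d → Matrix (Fin n) (Fin n) ℕ)
    (σ : Equiv.Perm (Fin n)) : Fin d → ℕ :=
  fun k => ∑ i, w k i (σ i)

/-- The polynomial g_y(a) = Σ { sign(σ) Π_i a_{i,σ(i)} : w·x_σ = y }. -/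
noncomputable def gPoly {n d : ℕ} (w : Fin d → Matrix (Fin n) (Fin n) ℕ)
    (y : Fin d → ℕ) : MvPolynomial (Fin n × Fin n) ℤ :=
  ∑ σ ∈ Finset.univ.filter (fun σ : Equiv.Perm (Fin n) => projPerm w σ = y),
    (Equiv.Perm.sign σ : ℤ) • ∏ i, MvPolynomial.X (i, σ i)

namespace MvPolynomial

open Equiv

variable {α R : Type*} [Fintype α] [CommSemiring R]

theorem isHomogeneous_prod_X_perm (τ : Perm α) :
    (∏ i, X (i, τ i) : MvPolynomial (α × α) R).IsHomogeneous (Fintype.card α) := by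
  simpa using IsHomogeneous.prod Finset.univ (fun i => X (i, τ i)) (fun _ => 1)
    fun i _ => isHomogeneous_X R (i, τ i)

theorem isHomogeneous_sum_smul_prod_X_perm (S : Finset (Perm α)) (c : Perm α → R) :
    (∑ τ ∈ S, c τ • ∏ i, X (i, τ i) : MvPolynomial (α × α) R).IsHomogeneous
      (Fintype.card α) :=
  IsHomogeneous.sum _ _ _ fun τ _ =>
    Submodule.smul_mem (homogeneousSubmodule _ R _) (c τ) (isHomogeneous_prod_X_perm τ)

variable [DecidableEq α]

theorem eval_permMatrix_prod_X (σ τ : Perm α) :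
    eval (fun p => σ.permMatrix R p.1 p.2) (∏ i, X (i, τ i)) = if τ = σ then 1 else 0 := by
  simp only [map_prod, eval_X, Perm.permMatrix, PEquiv.toMatrix_apply, toPEquiv_apply,
    Option.mem_def, Option.some.injEq, Finset.prod_boole]
  simp [Equiv.ext_iff, eq_comm]

theorem eval_permMatrix_sum_smul_prod_X (S : Finset (Perm α)) (c : Perm α → R) (σ : Perm α) :
    eval (fun p => σ.permMatrix R p.1 p.2) (∑ τ ∈ S, c τ • ∏ i, X (i, τ i)) =
      if σ ∈ S then c σ else 0 := by
  simp only [map_sum, smul_eval, eval_permMatrix_prod_X, mul_ite, mul_one, mul_zero,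
    Finset.sum_ite_eq']

end MvPolynomial

open MvPolynomial in
theorem gPoly_ne_zero_and_degree_general (n d : ℕ)
    (w : Fin d → Matrix (Fin n) (Fin n) ℕ) (y : Fin d → ℕ)
    (h : ∃ σ : Equiv.Perm (Fin n), projPerm w σ = y) :
    gPoly w y ≠ 0 ∧ (gPoly w y).totalDegree = n := by
  obtain ⟨σ, hσ⟩ := h
  have hhom : (gPoly w y).IsHomogeneous n := by
    unfold gPoly
    simpa only [Fintype.card_fin] using
      isHomogeneous_sum_smul_prod_X_perm (R := ℤ) {τ | projPerm w τ = y} fun τ => (τ.sign : ℤ)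
  have heval : eval (fun p => σ.permMatrix ℤ p.1 p.2) (gPoly w y) = σ.sign := by
    rw [gPoly, eval_permMatrix_sum_smul_prod_X _ fun τ => (τ.sign : ℤ),
      if_pos (Finset.mem_filter.mpr ⟨Finset.mem_univ σ, hσ⟩)]
  have hne : gPoly w y ≠ 0 := fun h0 => σ.sign.ne_zero (by rw [← heval, h0, map_zero])
  exact ⟨hne, hhom.totalDegree hne⟩

theorem gPoly_ne_zero_and_degree (n d : ℕ) (hn : 0 < n) (hd : 0 < d)
    (w : Fin d → Matrix (Fin n) (Fin n) ℕ) (y : Fin d → ℕ)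
    (h : ∃ σ : Equiv.Perm (Fin n), projPerm w σ = y) :
    gPoly w y ≠ 0 ∧ (gPoly w y).totalDegree = n :=
  gPoly_ne_zero_and_degree_general n d w y h
end

section
/- Let n, d, s be positive integers and let w^1,…,w^d ∈ ℕ^{n×n} be nonnegative integer weight matrices. Fix y ∈ ℕ^d such that y = w·x_σ for at least one permutation σ of {1,…,n}, and define g_y(a) := Σ { sign(σ) · Π_{i=1}^n a_{i,σ(i)} : σ a permutation with w·x_σ = y }. Then the number of assignments a : {1,…,n}×{1,…,n} → {1,2,…,s} with g_y(a) = 0 is at most n · s^{n²−1}; equivalently, if the a_{i,j} are independent and uniformly distributed on {1,…,s}, then the probability that g_y(a) = 0 is at most n/s. -/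
open Finset MvPolynomial Equiv

namespace MvPolynomial

variable {R : Type*} [CommRing R]

theorem schwartz_zippel_totalDegree_of_injective [IsDomain R] [DecidableEq R] {ι α : Type*}
    [Fintype ι] [DecidableEq ι] [Fintype α] {p : MvPolynomial ι R} (hp : p ≠ 0) {φ : α → R}
    (hφ : φ.Injective) :
    #{a : ι → α | eval (φ ∘ a) p = 0} * Fintype.card α
      ≤ p.totalDegree * Fintype.card α ^ Fintype.card ι := by
  rcases (Fintype.card α).eq_zero_or_pos with hα | hα
  · simp [hα]
  set e := Fintype.equivFin ι
  set q := renameEquiv R e p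
  set S := univ.image φ
  have hS : #S = Fintype.card α := card_image_of_injective _ hφ
  have hq : q ≠ 0 := (EmbeddingLike.map_ne_zero_iff).mpr hp
  have hzeros : #{a : ι → α | eval (φ ∘ a) p = 0}
      ≤ #{f ∈ Fintype.piFinset fun _ : Fin (Fintype.card ι) ↦ S | eval f q = 0} := by
    refine card_le_card_of_injOn (fun a ↦ φ ∘ a ∘ e.symm) (fun a ha ↦ ?_) ?_
    · simp only [coe_filter, mem_univ, true_and] at ha
      simpa [S, q, eval_rename, Function.comp_def] using ha
    · intro a _ b _ hab
      funext i
      simpa using hφ (congrFun hab (e i))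
  have hsz := schwartz_zippel_totalDegree hq S
  rw [totalDegree_renameEquiv, hS, div_le_div_iff₀ (by positivity) (by positivity)] at hsz
  calc _ ≤ #{f ∈ Fintype.piFinset fun _ : Fin (Fintype.card ι) ↦ S | eval f q = 0}
          * Fintype.card α := by gcongr
    _ ≤ _ := by exact_mod_cast hsz

section RestrictedDet

variable {ι : Type*} [Fintype ι] [DecidableEq ι]

noncomputable def restrictedDet (R : Type*) [CommRing R] (T : Finset (Perm ι)) :
    MvPolynomial (ι × ι) R :=
  ∑ σ ∈ T, (Perm.sign σ : ℤ) • ∏ i, X (i, σ i)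

theorem eval_restrictedDet (T : Finset (Perm ι)) (x : ι × ι → R) :
    eval x (restrictedDet R T) = ∑ σ ∈ T, (Perm.sign σ : ℤ) • ∏ i, x (i, σ i) := by
  simp [restrictedDet]

theorem totalDegree_restrictedDet_le (T : Finset (Perm ι)) :
    (restrictedDet R T).totalDegree ≤ Fintype.card ι :=
  totalDegree_finsetSum_le fun σ _ ↦ calc
    _ ≤ (∏ i, X (i, σ i) : MvPolynomial (ι × ι) R).totalDegree := totalDegree_smul_le _ _
    _ ≤ ∑ i : ι, (X (i, σ i) : MvPolynomial (ι × ι) R).totalDegree := totalDegree_finsetProd _ _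
    _ ≤ ∑ _i : ι, 1 := sum_le_sum fun i _ ↦ (totalDegree_monomial_le _ _).trans (by simp)
    _ = Fintype.card ι := by simp

theorem eval_permMatrix_restrictedDet (T : Finset (Perm ι)) {τ : Perm ι} (hτ : τ ∈ T) :
    eval (fun ij ↦ if τ ij.1 = ij.2 then 1 else 0) (restrictedDet R T)
      = ((Perm.sign τ : ℤ) : R) := by
  rw [eval_restrictedDet, sum_eq_single τ]
  · simp
  · intro σ _ hστ
    rw [Fintype.prod_boole, if_neg fun h ↦ hστ (Perm.ext fun i ↦ (h i).symm), smul_zero]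
  · exact fun h ↦ (h hτ).elim

theorem restrictedDet_ne_zero [Nontrivial R] {T : Finset (Perm ι)} (hT : T.Nonempty) :
    restrictedDet R T ≠ 0 := by
  obtain ⟨τ, hτ⟩ := hT
  intro h0
  have := eval_permMatrix_restrictedDet (R := R) T hτ
  rw [h0, map_zero] at this
  rcases Int.units_eq_one_or (Perm.sign τ) with h | h <;> simp [h] at this

end RestrictedDet

end MvPolynomial

theorem schwartz_zippel_for_gPoly_general (n d s : ℕ) (hs : 0 < s)
    (w : Fin d → Matrix (Fin n) (Fin n) ℕ) (y : Fin d → ℕ)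
    (h : ∃ σ : Equiv.Perm (Fin n), projPerm w σ = y) :
    (Finset.univ.filter fun a : Fin n × Fin n → Fin s =>
        (∑ σ ∈ Finset.univ.filter (fun σ : Equiv.Perm (Fin n) => projPerm w σ = y),
          (Equiv.Perm.sign σ : ℤ) * ∏ i, ((a (i, σ i) : ℕ) + 1 : ℤ)) = 0).card
      ≤ n * s ^ (n ^ 2 - 1) := by
  obtain ⟨σ₀, hσ₀⟩ := h
  set T := univ.filter fun σ : Perm (Fin n) ↦ projPerm w σ = y
  have hT : T.Nonempty := ⟨σ₀, by simp [T, hσ₀]⟩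
  have hφ : (fun i : Fin s ↦ ((i : ℕ) + 1 : ℤ)).Injective := fun i j hij ↦ by
    simpa [Fin.ext_iff] using hij
  have hbound := schwartz_zippel_totalDegree_of_injective (restrictedDet_ne_zero (R := ℤ) hT) hφ
  simp only [eval_restrictedDet, Function.comp_apply, smul_eq_mul, Fintype.card_fin,
    Fintype.card_prod] at hbound
  set Z := univ.filter fun a : Fin n × Fin n → Fin s ↦
    ∑ σ ∈ T, (Perm.sign σ : ℤ) * ∏ i, ((a (i, σ i) : ℕ) + 1 : ℤ) = 0
  have hZ : #Z * s ≤ n * s ^ (n * n) :=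
    hbound.trans (Nat.mul_le_mul_right _ (totalDegree_restrictedDet_le T |>.trans_eq (by simp)))
  rcases n.eq_zero_or_pos with rfl | hn
  · simpa [hs.ne'] using hZ
  · rw [← sq, ← Nat.sub_add_cancel (Nat.one_le_pow 2 n hn), pow_succ, ← mul_assoc] at hZ
    exact Nat.le_of_mul_le_mul_right hZ hs

theorem schwartz_zippel_for_gPoly (n d s : ℕ) (hn : 0 < n) (hd : 0 < d) (hs : 0 < s)
    (w : Fin d → Matrix (Fin n) (Fin n) ℕ) (y : Fin d → ℕ)
    (h : ∃ σ : Equiv.Perm (Fin n), projPerm w σ = y) :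
    (Finset.univ.filter fun a : Fin n × Fin n → Fin s =>
        (∑ σ ∈ Finset.univ.filter (fun σ : Equiv.Perm (Fin n) => projPerm w σ = y),
          (Equiv.Perm.sign σ : ℤ) * ∏ i, ((a (i, σ i) : ℕ) + 1 : ℤ)) = 0).card
      ≤ n * s ^ (n ^ 2 - 1) :=
  schwartz_zippel_for_gPoly_general n d s hs w y h
end

section
/- Let n be a positive integer and let σ, τ be distinct permutations of {1,…,n} such that the permutation τ∘σ^{-1} is a single cycle (IsCycle). Define the 0/1 matrix w by w_{i,j} := 1 if j = σ(i) or j = τ(i), and w_{i,j} := 0 otherwise. Then Σ_{i=1}^n w_{i,σ(i)} = Σ_{i=1}^n w_{i,τ(i)} = n, and for every permutation π of {1,…,n} with π ≠ σ and π ≠ τ one has Σ_{i=1}^n w_{i,π(i)} < n. (Consequently, the linear functional x ↦ Σ_{i,j} w_{i,j} x_{i,j} attains its maximum over the Birkhoff polytope exactly at the two permutation matrices x_σ and x_τ, so [x_σ, x_τ] is an edge of the Birkhoff polytope and x_σ − x_τ is an edge-direction.) -/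
/-!
A permutation `π` with `π i ∈ {σ i, τ i}` for all `i` gives `η := π σ⁻¹` with `η j ∈ {j, ρ j}`,
where `ρ := τ σ⁻¹`. Once `η` agrees with `ρ` at one point `x` moved by `ρ`, injectivity forces
`η (ρ x) = ρ (ρ x)` (the alternative `η (ρ x) = ρ x = η x` would force `ρ x = x`), so `η` agrees with `ρ`
along the whole orbit of `x`, which is all of the support when `ρ` is a cycle. Hence `π = σ` or
`π = τ`, and every other permutation misses the support of `w` at some row.
-/

namespace Equiv.Perm

variable {α : Type*} {ρ η : Perm α}

theorem apply_pow_eq_of_forall_apply_eq_or (h : ∀ j, η j = j ∨ η j = ρ j) {x : α}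
    (hx : η x = ρ x) (m : ℕ) : η ((ρ ^ m) x) = ρ ((ρ ^ m) x) := by
  induction m with
  | zero => simpa using hx
  | succ m ih =>
    rw [pow_succ', mul_apply]
    rcases h (ρ ((ρ ^ m) x)) with hfix | hmove
    · have hfixed : ρ ((ρ ^ m) x) = (ρ ^ m) x := η.injective (hfix.trans ih.symm)
      rwa [hfixed]
    · exact hmove

theorem IsCycle.eq_one_or_eq_of_forall_apply_eq_or [Finite α] (hρ : ρ.IsCycle)
    (h : ∀ j, η j = j ∨ η j = ρ j) : η = 1 ∨ η = ρ := by
  by_cases hmoved : ∃ x, ρ x ≠ x ∧ η x = ρ x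
  · obtain ⟨x, hx, hηx⟩ := hmoved
    refine Or.inr (ext fun y => ?_)
    by_cases hy : ρ y = y
    · simpa [hy] using h y
    · obtain ⟨m, rfl⟩ := hρ.exists_pow_eq hx hy
      exact apply_pow_eq_of_forall_apply_eq_or h hηx m
  · push Not at hmoved
    refine Or.inl (ext fun y => ?_)
    by_cases hy : ρ y = y
    · simpa [hy] using h y
    · exact (h y).resolve_right (hmoved y hy)

theorem eq_or_eq_of_forall_apply_eq_or [Finite α] {σ τ π : Perm α} (hcyc : (τ * σ⁻¹).IsCycle)
    (h : ∀ i, π i = σ i ∨ π i = τ i) : π = σ ∨ π = τ := by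
  have hquot : ∀ j, (π * σ⁻¹) j = j ∨ (π * σ⁻¹) j = (τ * σ⁻¹) j := fun j => by
    simpa using h (σ⁻¹ j)
  rcases hcyc.eq_one_or_eq_of_forall_apply_eq_or hquot with h1 | hτ
  · exact Or.inl (mul_inv_eq_one.mp h1)
  · exact Or.inr (mul_right_cancel hτ)

end Equiv.Perm

open Finset in
theorem circuit_gives_edge_general (n : ℕ) (σ τ : Equiv.Perm (Fin n))
    (hcyc : (τ * σ⁻¹).IsCycle)
    (w : Matrix (Fin n) (Fin n) ℕ)
    (hw : ∀ i j, w i j = if j = σ i ∨ j = τ i then 1 else 0) :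
    (∑ i, w i (σ i) = n) ∧ (∑ i, w i (τ i) = n) ∧
      ∀ π : Equiv.Perm (Fin n), π ≠ σ → π ≠ τ → ∑ i, w i (π i) < n := by
  have hrow : ∀ π : Equiv.Perm (Fin n), ∑ i, w i (π i) = #{i | π i = σ i ∨ π i = τ i} := by
    simp [hw]
  refine ⟨by simp [hrow], by simp [hrow], fun π hπσ hπτ => ?_⟩
  obtain ⟨i, hi⟩ : ∃ i, ¬(π i = σ i ∨ π i = τ i) := by
    by_contra! hall
    rcases Equiv.Perm.eq_or_eq_of_forall_apply_eq_or hcyc hall with h | h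
    exacts [hπσ h, hπτ h]
  calc ∑ i, w i (π i) = #{i | π i = σ i ∨ π i = τ i} := hrow π
    _ < #(univ : Finset (Fin n)) := card_lt_card (filter_ssubset.2 ⟨i, mem_univ i, hi⟩)
    _ = n := card_fin n

theorem circuit_gives_edge (n : ℕ) (hn : 0 < n) (σ τ : Equiv.Perm (Fin n))
    (hne : σ ≠ τ) (hcyc : (τ * σ⁻¹).IsCycle)
    (w : Matrix (Fin n) (Fin n) ℕ)
    (hw : ∀ i j, w i j = if j = σ i ∨ j = τ i then 1 else 0) :
    (∑ i, w i (σ i) = n) ∧ (∑ i, w i (τ i) = n) ∧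
      ∀ π : Equiv.Perm (Fin n), π ≠ σ → π ≠ τ → ∑ i, w i (π i) < n :=
  circuit_gives_edge_general n σ τ hcyc w hw
end
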